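/- arXiv:1501.00597 — 3 statements merged into one kernel-verified Lean document; each statement's English description precedes it below -/
import Mathlib

section
/- Call a collection Δ ⊆ 𝒟/~ a d-system if: (i) [ℕ] ∈ Δ; (ii) for [A], [B] ∈ Δ with [A] ⪯_𝒩 [B] one has [B ∖ A] ∈ Δ; (iii) for [A], [B] ∈ Δ with A ∩ B = ∅ one has [A ∪ B] ∈ Δ; (iv) every ⪯_𝒩-increasing sequence in Δ has a least upper bound in 𝒟/~ which belongs to Δ. Let 𝓕 ⊆ 𝒟 be closed under finite intersections and let Δ be the intersection of all d-systems in 𝒟/~ containing 𝓕/~. Then Δ is closed under intersections: for all [A], [B] ∈ Δ, A ∩ B is a density set and [A ∩ B] ∈ Δ. -/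
/-- The counting sequence `n ↦ |A ∩ {1,…,n}| / n` of a set of natural numbers. -/
noncomputable def densSeq (A : Set ℕ) (n : ℕ) : ℝ :=
  (Nat.card ↥(A ∩ Set.Icc 1 n) : ℝ) / (n : ℝ)

/-- `A` has natural density `a`. -/
def HasDens (A : Set ℕ) (a : ℝ) : Prop :=
  Filter.Tendsto (densSeq A) Filter.atTop (nhds a)

/-- `A` is a density set, i.e. its natural density exists. -/
def IsDensitySet (A : Set ℕ) : Prop := ∃ a, HasDens A a

/-- `A` is a null density set. -/
def NullDens (A : Set ℕ) : Prop := HasDens A 0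

/-- The relation `A ⪯_𝒩 B`: there is a null density set `N` with `A ⊆ B ∪ N`. -/
def DensLE (A B : Set ℕ) : Prop := ∃ N, NullDens N ∧ A ⊆ B ∪ N


/-- `K ∼ M`: the symmetric difference of `K` and `M` has null density. -/
def EquivDens (K M : Set ℕ) : Prop := NullDens (symmDiff K M)

/-- A *d-system* is a collection of `∼`-equivalence classes of density sets (represented
as a `∼`-saturated collection `Δ` of density sets) such that: (i) `[ℕ] ∈ Δ`;
(ii) `[A], [B] ∈ Δ` with `[A] ⪯_𝒩 [B]` implies `[B ∖ A] ∈ Δ`; (iii) `[A], [B] ∈ Δ` with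
`A ∩ B = ∅` implies `[A ∪ B] ∈ Δ`; (iv) every `⪯_𝒩`-increasing sequence in `Δ` has a
least upper bound in `𝒟/∼` which belongs to `Δ`. -/
def IsDSystem (Δ : Set (Set ℕ)) : Prop :=
  (∀ A ∈ Δ, IsDensitySet A) ∧
  (∀ A ∈ Δ, ∀ B, IsDensitySet B → EquivDens A B → B ∈ Δ) ∧
  Set.univ ∈ Δ ∧
  (∀ A ∈ Δ, ∀ B ∈ Δ, DensLE A B → B \ A ∈ Δ) ∧
  (∀ A ∈ Δ, ∀ B ∈ Δ, A ∩ B = ∅ → A ∪ B ∈ Δ) ∧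
  (∀ A : ℕ → Set ℕ, (∀ n, A n ∈ Δ) → (∀ n, DensLE (A n) (A (n + 1))) →
    ∃ B ∈ Δ, (∀ n, DensLE (A n) B) ∧
      ∀ C : Set ℕ, IsDensitySet C → (∀ n, DensLE (A n) C) → DensLE B C)

open Set Filter Topology

/-!
Dynkin's π-λ argument, run in `𝒟/∼`. For `A` in the generated d-system `G`, the sets `B ∈ G`
with `A ∩ B ∈ G` form a d-system; it contains `𝓕` first for `A ∈ 𝓕` and then, by symmetry,
for every `A ∈ G`, so it is all of `G`.

Two facts about `𝒟/∼` make this work. First, `𝒟/∼` is itself a d-system (so `G` consists of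
density sets): a `⪯_𝒩`-chain of density sets, made increasing, has as supremum the union of
its tails `C k \ [0, m k]` for fast-growing `m`. Second, intersecting with a density set
commutes with suprema of chains, which gives axiom (iv) for the slice.
-/

section Counting

variable {A B : Set ℕ} {n : ℕ}

lemma densSeq_eq_ncard (A : Set ℕ) (n : ℕ) : densSeq A n = (A ∩ Icc 1 n).ncard / n := by
  rw [densSeq, Nat.card_coe_set_eq]

lemma densSeq_nonneg (A : Set ℕ) (n : ℕ) : 0 ≤ densSeq A n := by
  rw [densSeq_eq_ncard]; positivity

lemma densSeq_le_of_inter_Icc_subset (h : A ∩ Icc 1 n ⊆ B) : densSeq A n ≤ densSeq B n := by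
  rw [densSeq_eq_ncard, densSeq_eq_ncard]
  refine div_le_div_of_nonneg_right ?_ n.cast_nonneg
  exact_mod_cast ncard_le_ncard (subset_inter h inter_subset_right)
    ((finite_Icc 1 n).inter_of_right B)

lemma densSeq_mono (h : A ⊆ B) (n : ℕ) : densSeq A n ≤ densSeq B n :=
  densSeq_le_of_inter_Icc_subset (inter_subset_left.trans h)

lemma densSeq_univ_le_one (n : ℕ) : densSeq univ n ≤ 1 := by
  rw [densSeq_eq_ncard, univ_inter, ncard_eq_toFinset_card']
  simpa using div_self_le_one (n : ℝ)

lemma densSeq_univ_of_pos (hn : 0 < n) : densSeq univ n = 1 := by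
  rw [densSeq_eq_ncard, univ_inter, ncard_eq_toFinset_card']
  simpa using div_self (Nat.cast_ne_zero.2 hn.ne' : (n : ℝ) ≠ 0)

lemma densSeq_le_one (A : Set ℕ) (n : ℕ) : densSeq A n ≤ 1 :=
  (densSeq_mono (subset_univ A) n).trans (densSeq_univ_le_one n)

lemma densSeq_union_of_disjoint (h : Disjoint A B) (n : ℕ) :
    densSeq (A ∪ B) n = densSeq A n + densSeq B n := by
  simp only [densSeq_eq_ncard, ← add_div, union_inter_distrib_right]
  rw [ncard_union_eq (h.mono inter_subset_left inter_subset_left)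
    ((finite_Icc 1 n).inter_of_right A) ((finite_Icc 1 n).inter_of_right B), Nat.cast_add]

lemma densSeq_union_le (A B : Set ℕ) (n : ℕ) : densSeq (A ∪ B) n ≤ densSeq A n + densSeq B n := by
  rw [← union_sdiff_self, densSeq_union_of_disjoint disjoint_sdiff_right]
  gcongr
  exact densSeq_mono sdiff_subset n

lemma densSeq_inter_add_sdiff (A B : Set ℕ) (n : ℕ) :
    densSeq (A ∩ B) n + densSeq (A \ B) n = densSeq A n := by
  rw [← densSeq_union_of_disjoint disjoint_sdiff_inter.symm, inter_union_sdiff]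

lemma Set.Finite.densSeq_le (hA : A.Finite) (n : ℕ) : densSeq A n ≤ A.ncard / n := by
  rw [densSeq_eq_ncard]
  gcongr
  exact inter_subset_left

end Counting

section Null

variable {A B C M N : Set ℕ}

lemma NullDens.mono (hN : NullDens N) (h : M ⊆ N) : NullDens M :=
  squeeze_zero (densSeq_nonneg M) (densSeq_mono h) hN

lemma NullDens.union (hM : NullDens M) (hN : NullDens N) : NullDens (M ∪ N) :=
  squeeze_zero (densSeq_nonneg _) (densSeq_union_le M N) (by simpa using hM.add hN)

lemma nullDens_union_iff : NullDens (M ∪ N) ↔ NullDens M ∧ NullDens N :=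
  ⟨fun h => ⟨h.mono subset_union_left, h.mono subset_union_right⟩, fun h => h.1.union h.2⟩

lemma Set.Finite.nullDens (hN : N.Finite) : NullDens N :=
  squeeze_zero (densSeq_nonneg N) hN.densSeq_le
    (tendsto_const_nhds.div_atTop tendsto_natCast_atTop_atTop)

lemma densLE_iff_nullDens_sdiff : DensLE A B ↔ NullDens (A \ B) := by
  refine ⟨fun ⟨N, hN, h⟩ => hN.mono fun x hx => (h hx.1).resolve_left hx.2, fun h => ?_⟩
  exact ⟨A \ B, h, fun x hx => (em (x ∈ B)).imp id fun hB => ⟨hx, hB⟩⟩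

lemma densLE_of_subset (h : A ⊆ B) : DensLE A B :=
  densLE_iff_nullDens_sdiff.2 ((sdiff_eq_empty.2 h).symm ▸ finite_empty.nullDens)

lemma DensLE.trans (hAB : DensLE A B) (hBC : DensLE B C) : DensLE A C := by
  rw [densLE_iff_nullDens_sdiff] at *
  exact (hAB.union hBC).mono (sdiff_triangle A B C)

lemma DensLE.union (hA : DensLE A C) (hB : DensLE B C) : DensLE (A ∪ B) C := by
  rw [densLE_iff_nullDens_sdiff, union_sdiff_distrib]
  exact (densLE_iff_nullDens_sdiff.1 hA).union (densLE_iff_nullDens_sdiff.1 hB)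

lemma DensLE.inter (hB : DensLE A B) (hC : DensLE A C) : DensLE A (B ∩ C) := by
  rw [densLE_iff_nullDens_sdiff, sdiff_inter]
  exact (densLE_iff_nullDens_sdiff.1 hB).union (densLE_iff_nullDens_sdiff.1 hC)

lemma DensLE.inter_left (h : DensLE A B) (C : Set ℕ) : DensLE (C ∩ A) (C ∩ B) :=
  densLE_iff_nullDens_sdiff.2 <| (densLE_iff_nullDens_sdiff.1 h).mono fun _ hx =>
    ⟨hx.1.2, fun hB => hx.2 ⟨hx.1.1, hB⟩⟩

lemma equivDens_iff : EquivDens A B ↔ DensLE A B ∧ DensLE B A := by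
  rw [EquivDens, symmDiff_def, densLE_iff_nullDens_sdiff, densLE_iff_nullDens_sdiff]
  exact nullDens_union_iff

lemma EquivDens.symm (h : EquivDens A B) : EquivDens B A := by
  rw [EquivDens, symmDiff_comm]; exact h

lemma EquivDens.inter_left (h : EquivDens A B) (C : Set ℕ) : EquivDens (C ∩ A) (C ∩ B) :=
  equivDens_iff.2 ⟨(equivDens_iff.1 h).1.inter_left C, (equivDens_iff.1 h).2.inter_left C⟩

lemma equivDens_inter_of_densLE (h : DensLE A B) : EquivDens A (B ∩ A) :=
  equivDens_iff.2 ⟨h.inter (densLE_of_subset subset_rfl), densLE_of_subset inter_subset_right⟩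

end Null

section Density

variable {A B : Set ℕ} {a b : ℝ}

lemma HasDens.inter_of_densLE (hA : HasDens A a) (h : DensLE A B) : HasDens (A ∩ B) a := by
  have := (hA.sub (densLE_iff_nullDens_sdiff.1 h)).congr (f₂ := densSeq (A ∩ B)) fun n => by
    linarith [densSeq_inter_add_sdiff A B n]
  rwa [sub_zero] at this

lemma HasDens.congr (hA : HasDens A a) (h : EquivDens A B) : HasDens B a := by
  have hBA : HasDens (B ∩ A) a := inter_comm A B ▸ hA.inter_of_densLE (equivDens_iff.1 h).1
  have := (hBA.add (densLE_iff_nullDens_sdiff.1 (equivDens_iff.1 h).2)).congr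
    (densSeq_inter_add_sdiff B A)
  rwa [add_zero] at this

lemma HasDens.sdiff_of_densLE (hA : HasDens A a) (hB : HasDens B b) (h : DensLE A B) :
    HasDens (B \ A) (b - a) := by
  have hBA : HasDens (B ∩ A) a := inter_comm A B ▸ hA.inter_of_densLE h
  exact (hB.sub hBA).congr fun n => by linarith [densSeq_inter_add_sdiff B A n]

lemma HasDens.union_of_disjoint (hA : HasDens A a) (hB : HasDens B b) (h : Disjoint A B) :
    HasDens (A ∪ B) (a + b) :=
  (hA.add hB).congr fun n => (densSeq_union_of_disjoint h n).symm

lemma hasDens_univ : HasDens univ 1 :=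
  tendsto_const_nhds.congr' <|
    (eventually_gt_atTop 0).mono fun _ hn => (densSeq_univ_of_pos hn).symm

lemma HasDens.le_of_subset (hA : HasDens A a) (hB : HasDens B b) (h : A ⊆ B) : a ≤ b :=
  le_of_tendsto_of_tendsto' hA hB (densSeq_mono h)

lemma HasDens.le_one (hA : HasDens A a) : a ≤ 1 :=
  le_of_tendsto' hA (densSeq_le_one A)

lemma IsDensitySet.congr (hA : IsDensitySet A) (h : EquivDens A B) : IsDensitySet B :=
  hA.imp fun _ ha => ha.congr h

lemma IsDensitySet.sdiff_of_densLE (hA : IsDensitySet A) (hB : IsDensitySet B)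
    (h : DensLE A B) : IsDensitySet (B \ A) :=
  let ⟨_, ha⟩ := hA; let ⟨_, hb⟩ := hB; ⟨_, ha.sdiff_of_densLE hb h⟩

lemma IsDensitySet.union_of_disjoint (hA : IsDensitySet A) (hB : IsDensitySet B)
    (h : Disjoint A B) : IsDensitySet (A ∪ B) :=
  let ⟨_, ha⟩ := hA; let ⟨_, hb⟩ := hB; ⟨_, ha.union_of_disjoint hb h⟩

lemma isDensitySet_univ : IsDensitySet univ := ⟨1, hasDens_univ⟩

lemma IsDensitySet.compl (hA : IsDensitySet A) : IsDensitySet Aᶜ :=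
  compl_eq_univ_sdiff A ▸ hA.sdiff_of_densLE isDensitySet_univ (densLE_of_subset (subset_univ A))

end Density

theorem tendsto_of_forall_squeeze {α β : Type*} [TopologicalSpace α] [LinearOrder α]
    [OrderTopology α] {l : Filter β} {f : β → α} {c : α} {a b : ℕ → α} {g h : ℕ → β → α}
    (ha : Tendsto a atTop (𝓝 c)) (hb : Tendsto b atTop (𝓝 c))
    (hg : ∀ j, Tendsto (g j) l (𝓝 (a j))) (hh : ∀ j, Tendsto (h j) l (𝓝 (b j)))
    (hgf : ∀ j, ∀ᶠ x in l, g j x ≤ f x) (hfh : ∀ j, ∀ᶠ x in l, f x ≤ h j x) :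
    Tendsto f l (𝓝 c) := by
  refine tendsto_order.2 ⟨fun c' hc' => ?_, fun c' hc' => ?_⟩
  · obtain ⟨j, hj⟩ := (ha.eventually (lt_mem_nhds hc')).exists
    filter_upwards [(hg j).eventually (lt_mem_nhds hj), hgf j] with x h₁ h₂ using h₁.trans_le h₂
  · obtain ⟨j, hj⟩ := (hb.eventually (gt_mem_nhds hc')).exists
    filter_upwards [(hh j).eventually (gt_mem_nhds hj), hfh j] with x h₁ h₂ using h₂.trans_lt h₁

/-- `B \ C ⊆ (B \ X j) ∪ (X j \ C)`, whose density tends to `b - x j`. -/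
lemma densLE_of_tendsto_hasDens {X : ℕ → Set ℕ} {x : ℕ → ℝ} {B C : Set ℕ} {b : ℝ}
    (hB : HasDens B b) (hX : ∀ j, HasDens (X j) (x j)) (hx : Tendsto x atTop (𝓝 b))
    (hXB : ∀ j, DensLE (X j) B) (hXC : ∀ j, DensLE (X j) C) : DensLE B C := by
  rw [densLE_iff_nullDens_sdiff]
  refine tendsto_of_forall_squeeze (a := fun _ => 0) (b := fun j => b - x j + 0)
    tendsto_const_nhds ?_ (fun _ => tendsto_const_nhds)
    (fun j => ((hX j).sdiff_of_densLE hB (hXB j)).add (densLE_iff_nullDens_sdiff.1 (hXC j)))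
    (fun _ => .of_forall (densSeq_nonneg _))
    (fun j => .of_forall fun n =>
      (densSeq_mono (sdiff_triangle B (X j) C) n).trans (densSeq_union_le _ _ n))
  simpa using (tendsto_const_nhds (x := b)).sub hx

def IsDensLUB (A : ℕ → Set ℕ) (B : Set ℕ) : Prop :=
  (∀ n, DensLE (A n) B) ∧ ∀ C, IsDensitySet C → (∀ n, DensLE (A n) C) → DensLE B C

section LUB

variable {A A' : ℕ → Set ℕ} {B B' : Set ℕ}

lemma IsDensLUB.equivDens (h : IsDensLUB A B) (h' : IsDensLUB A B') (hB : IsDensitySet B)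
    (hB' : IsDensitySet B') : EquivDens B B' :=
  equivDens_iff.2 ⟨h.2 B' hB' h'.1, h'.2 B hB h.1⟩

lemma IsDensLUB.congr (h : IsDensLUB A B) (hB : EquivDens B B') : IsDensLUB A B' :=
  ⟨fun n => (h.1 n).trans (equivDens_iff.1 hB).1,
    fun C hC hAC => (equivDens_iff.1 hB).2.trans (h.2 C hC hAC)⟩

lemma IsDensLUB.congr_seq (h : IsDensLUB A B) (hA : ∀ n, EquivDens (A n) (A' n)) :
    IsDensLUB A' B :=
  ⟨fun n => (equivDens_iff.1 (hA n)).2.trans (h.1 n),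
    fun C hC hAC => h.2 C hC fun n => (equivDens_iff.1 (hA n)).1.trans (hAC n)⟩

lemma exists_mem_Ioc_of_strictMono {m : ℕ → ℕ} (hm : StrictMono m) {n : ℕ} (hn : m 0 < n) :
    ∃ i, m i < n ∧ n ≤ m (i + 1) := by
  classical
  have hex : ∃ t, n ≤ m t := ⟨n, hm.id_le n⟩
  obtain ⟨i, hi⟩ : ∃ i, Nat.find hex = i + 1 :=
    Nat.exists_eq_succ_of_ne_zero fun h => (Nat.find_spec hex).not_gt (by rwa [h])
  refine ⟨i, not_le.1 (Nat.find_min hex (by omega)), ?_⟩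
  rw [← hi]
  exact Nat.find_spec hex

lemma iUnion_sdiff_Iic_inter_Icc_subset {C : ℕ → Set ℕ} {m : ℕ → ℕ} (hC : Monotone C)
    (hm : StrictMono m) {i n : ℕ} (hn : n ≤ m (i + 1)) :
    (⋃ k, C k \ Iic (m k)) ∩ Icc 1 n ⊆ C i := by
  rintro x ⟨hx, -, hxn⟩
  obtain ⟨k, hxk, hkx⟩ := mem_iUnion.1 hx
  exact hC (Nat.lt_succ_iff.1 (hm.lt_iff_lt.1 ((not_le.1 hkx).trans_le (hxn.trans hn)))) hxk

/-- The supremum is `⋃ k, C k \ [0, m k]`, where `m k` is chosen so large that `C k` has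
relative density at most `c k + 1 / (k + 1)` in every initial segment past `m k`. -/
theorem Monotone.exists_isDensLUB {C : ℕ → Set ℕ} {c : ℕ → ℝ} (hC : Monotone C)
    (hc : ∀ k, HasDens (C k) (c k)) : ∃ B, IsDensitySet B ∧ IsDensLUB C B := by
  have hcbdd : BddAbove (range c) := ⟨1, forall_mem_range.2 fun k => (hc k).le_one⟩
  have hcs : Tendsto c atTop (𝓝 (⨆ k, c k)) :=
    tendsto_atTop_ciSup (fun k l hkl => (hc k).le_of_subset (hc l) (hC hkl)) hcbdd
  obtain ⟨m, hm, hmC⟩ := extraction_forall_of_eventually'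
    (P := fun k M => ∀ n ≥ M, densSeq (C k) n ≤ c k + 1 / (k + 1)) fun k => by
      obtain ⟨N, hN⟩ := eventually_atTop.1 <|
        (hc k).eventually (eventually_le_nhds (lt_add_of_pos_right (c k) Nat.one_div_pos_of_nat))
      exact ⟨N, fun M hM n hn => hN n (hM.trans hn)⟩
  set B := ⋃ k, C k \ Iic (m k)
  have hCB : ∀ j, C j ⊆ B ∪ Iic (m j) := fun j x hx =>
    (le_or_gt x (m j)).elim Or.inr fun hlt => Or.inl (mem_iUnion.2 ⟨j, hx, not_le.2 hlt⟩)
  have hB : HasDens B (⨆ k, c k) := by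
    have hbs : Tendsto (fun j : ℕ => (⨆ k, c k) + 1 / (j + 1)) atTop (𝓝 (⨆ k, c k)) := by
      simpa using tendsto_const_nhds.add (tendsto_one_div_add_atTop_nhds_zero_nat (𝕜 := ℝ))
    refine tendsto_of_forall_squeeze hcs hbs
      (g := fun j n => densSeq (C j) n - densSeq (Iic (m j)) n)
      (fun j => by simpa using (hc j).sub (finite_Iic (m j)).nullDens)
      (fun j => tendsto_const_nhds) (fun j => .of_forall fun n => ?_) fun j => ?_
    · linarith [(densSeq_mono (hCB j) n).trans (densSeq_union_le B _ n)]
    · filter_upwards [eventually_gt_atTop (m j)] with n hn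
      obtain ⟨i, hin, hni⟩ := exists_mem_Ioc_of_strictMono hm ((hm.monotone j.zero_le).trans_lt hn)
      have hji : j ≤ i := Nat.lt_succ_iff.1 (hm.lt_iff_lt.1 (hn.trans_le hni))
      calc densSeq B n ≤ densSeq (C i) n :=
            densSeq_le_of_inter_Icc_subset (iUnion_sdiff_Iic_inter_Icc_subset hC hm hni)
        _ ≤ c i + 1 / (i + 1) := hmC i n hin.le
        _ ≤ (⨆ k, c k) + 1 / (j + 1) := add_le_add (le_ciSup hcbdd i) (Nat.one_div_le_one_div hji)
  have hCB' : ∀ j, DensLE (C j) B := fun j =>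
    ⟨Iic (m j), (finite_Iic (m j)).nullDens, hCB j⟩
  exact ⟨B, ⟨_, hB⟩, hCB', fun D _ hCD => densLE_of_tendsto_hasDens hB hc hcs hCB' hCD⟩

lemma equivDens_accumulate (hA : ∀ n, DensLE (A n) (A (n + 1))) (n : ℕ) :
    EquivDens (A n) (accumulate A n) := by
  refine equivDens_iff.2 ⟨densLE_of_subset subset_accumulate, ?_⟩
  induction n with
  | zero => simpa using densLE_of_subset subset_rfl
  | succ n ih =>
    rw [accumulate_succ]
    exact (ih.trans (hA n)).union (densLE_of_subset subset_rfl)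

theorem exists_isDensLUB (hA : ∀ n, IsDensitySet (A n)) (hch : ∀ n, DensLE (A n) (A (n + 1))) :
    ∃ B, IsDensitySet B ∧ IsDensLUB A B := by
  have hacc := equivDens_accumulate hch
  choose c hc using fun n => (hA n).congr (hacc n)
  obtain ⟨B, hB, hlub⟩ := monotone_accumulate.exists_isDensLUB hc
  exact ⟨B, hB, hlub.congr_seq fun n => (hacc n).symm⟩

/-- Split the chain along `A` and `Aᶜ`: the suprema `D` and `E` of the two halves lie below
`A` and `Aᶜ`, so `Bg` lies below `(A ∩ D) ∪ (Aᶜ ∩ E)`, which forces `A ∩ Bg ∼ D`. -/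
theorem IsDensLUB.inter {A Bg : Set ℕ} {B : ℕ → Set ℕ} (hBg : IsDensLUB B Bg)
    (hBgd : IsDensitySet Bg) (hA : IsDensitySet A) (hB : ∀ n, IsDensitySet (B n))
    (hAB : ∀ n, IsDensitySet (A ∩ B n)) (hch : ∀ n, DensLE (B n) (B (n + 1))) :
    IsDensitySet (A ∩ Bg) ∧ IsDensLUB (fun n => A ∩ B n) (A ∩ Bg) := by
  obtain ⟨D, hD, hDlub⟩ := exists_isDensLUB hAB fun n => (hch n).inter_left A
  have hAcB : ∀ n, IsDensitySet (Aᶜ ∩ B n) := fun n =>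
    sdiff_eq_compl_inter ▸ sdiff_inter_self_eq_sdiff ▸
      (hAB n).sdiff_of_densLE (hB n) (densLE_of_subset inter_subset_right)
  obtain ⟨E, hE, hElub⟩ := exists_isDensLUB hAcB fun n => (hch n).inter_left Aᶜ
  have hDA : DensLE D A := hDlub.2 A hA fun n => densLE_of_subset inter_subset_left
  have hEA : DensLE E Aᶜ := hElub.2 _ hA.compl fun n => densLE_of_subset inter_subset_left
  have hU : IsDensitySet ((A ∩ D) ∪ (Aᶜ ∩ E)) :=
    (hD.congr (equivDens_inter_of_densLE hDA)).union_of_disjoint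
      (hE.congr (equivDens_inter_of_densLE hEA))
      (disjoint_compl_right.mono inter_subset_left inter_subset_left)
  have hBU : ∀ n, DensLE (B n) ((A ∩ D) ∪ (Aᶜ ∩ E)) := fun n =>
    (densLE_of_subset fun x hx => (em (x ∈ A)).imp (⟨·, hx⟩) (⟨·, hx⟩)).trans <|
      (((densLE_of_subset inter_subset_left).inter (hDlub.1 n)).trans
        (densLE_of_subset subset_union_left)).union
      (((densLE_of_subset inter_subset_left).inter (hElub.1 n)).trans
        (densLE_of_subset subset_union_right))
  have hle : DensLE (A ∩ Bg) D := ((hBg.2 _ hU hBU).inter_left A).trans <|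
    densLE_of_subset fun x ⟨hxA, hx⟩ => hx.elim (·.2) fun h => absurd hxA h.1
  have hge : DensLE D (A ∩ Bg) := hDA.inter <|
    hDlub.2 Bg hBgd fun n => (densLE_of_subset inter_subset_right).trans (hBg.1 n)
  have hDBg : EquivDens D (A ∩ Bg) := equivDens_iff.2 ⟨hge, hle⟩
  exact ⟨hD.congr hDBg, hDlub.congr hDBg⟩

end LUB

namespace IsDSystem

variable {Δ : Set (Set ℕ)} {A B : Set ℕ}

lemma isDensitySet (hΔ : IsDSystem Δ) (hA : A ∈ Δ) : IsDensitySet A := hΔ.1 A hA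

lemma mem_of_equivDens (hΔ : IsDSystem Δ) (hA : A ∈ Δ) (hB : IsDensitySet B)
    (h : EquivDens A B) : B ∈ Δ :=
  hΔ.2.1 A hA B hB h

lemma univ_mem (hΔ : IsDSystem Δ) : univ ∈ Δ := hΔ.2.2.1

lemma sdiff_mem (hΔ : IsDSystem Δ) (hA : A ∈ Δ) (hB : B ∈ Δ) (h : DensLE A B) : B \ A ∈ Δ :=
  hΔ.2.2.2.1 A hA B hB h

lemma union_mem (hΔ : IsDSystem Δ) (hA : A ∈ Δ) (hB : B ∈ Δ) (h : A ∩ B = ∅) : A ∪ B ∈ Δ :=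
  hΔ.2.2.2.2.1 A hA B hB h

lemma exists_lub_mem (hΔ : IsDSystem Δ) {A : ℕ → Set ℕ} (hA : ∀ n, A n ∈ Δ)
    (hch : ∀ n, DensLE (A n) (A (n + 1))) : ∃ B ∈ Δ, IsDensLUB A B :=
  hΔ.2.2.2.2.2 A hA hch

lemma mem_of_isDensLUB (hΔ : IsDSystem Δ) {A : ℕ → Set ℕ} (hA : ∀ n, A n ∈ Δ)
    (hch : ∀ n, DensLE (A n) (A (n + 1))) (hB : IsDensLUB A B) (hBd : IsDensitySet B) :
    B ∈ Δ :=
  let ⟨_, hB', hlub⟩ := hΔ.exists_lub_mem hA hch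
  hΔ.mem_of_equivDens hB' hBd (hlub.equivDens hB (hΔ.isDensitySet hB') hBd)

theorem sInter {S : Set (Set (Set ℕ))} (hS : S.Nonempty) (h : ∀ Δ ∈ S, IsDSystem Δ) :
    IsDSystem (⋂₀ S) := by
  obtain ⟨Δ₀, hΔ₀⟩ := hS
  refine ⟨fun A hA => (h Δ₀ hΔ₀).isDensitySet (hA Δ₀ hΔ₀),
    fun A hA B hB hAB Δ hΔ => (h Δ hΔ).mem_of_equivDens (hA Δ hΔ) hB hAB,
    fun Δ hΔ => (h Δ hΔ).univ_mem,
    fun A hA B hB hAB Δ hΔ => (h Δ hΔ).sdiff_mem (hA Δ hΔ) (hB Δ hΔ) hAB,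
    fun A hA B hB hAB Δ hΔ => (h Δ hΔ).union_mem (hA Δ hΔ) (hB Δ hΔ) hAB,
    fun A hA hch => ?_⟩
  obtain ⟨B, hB, hlub⟩ := (h Δ₀ hΔ₀).exists_lub_mem (fun n => hA n Δ₀ hΔ₀) hch
  exact ⟨B, fun Δ hΔ => (h Δ hΔ).mem_of_isDensLUB (fun n => hA n Δ hΔ) hch hlub
    ((h Δ₀ hΔ₀).isDensitySet hB), hlub⟩

theorem setOf_inter_mem (hΔ : IsDSystem Δ) (hA : A ∈ Δ) :
    IsDSystem {B | B ∈ Δ ∧ A ∩ B ∈ Δ} := by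
  refine ⟨fun B hB => hΔ.isDensitySet hB.1,
    fun B hB B' hB' h => ⟨hΔ.mem_of_equivDens hB.1 hB' h, hΔ.mem_of_equivDens hB.2
      ((hΔ.isDensitySet hB.2).congr (h.inter_left A)) (h.inter_left A)⟩,
    ⟨hΔ.univ_mem, (inter_univ A).symm ▸ hA⟩,
    fun B hB C hC h => ⟨hΔ.sdiff_mem hB.1 hC.1 h,
      inter_sdiff_distrib_left A C B ▸ hΔ.sdiff_mem hB.2 hC.2 (h.inter_left A)⟩,
    fun B hB C hC h => ⟨hΔ.union_mem hB.1 hC.1 h, inter_union_distrib_left A B C ▸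
      hΔ.union_mem hB.2 hC.2 (by rw [← inter_inter_distrib_left, h, inter_empty])⟩,
    fun B hB hch => ?_⟩
  obtain ⟨Bg, hBg, hlub⟩ := hΔ.exists_lub_mem (fun n => (hB n).1) hch
  obtain ⟨hABg, hABglub⟩ := hlub.inter (hΔ.isDensitySet hBg) (hΔ.isDensitySet hA)
    (fun n => hΔ.isDensitySet (hB n).1) (fun n => hΔ.isDensitySet (hB n).2) hch
  exact ⟨Bg, ⟨hBg, hΔ.mem_of_isDensLUB (fun n => (hB n).2) (fun n => (hch n).inter_left A)
    hABglub hABg⟩, hlub⟩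

end IsDSystem

theorem isDSystem_setOf_isDensitySet : IsDSystem {A | IsDensitySet A} :=
  ⟨fun _ hA => hA, fun _ _ _ hB _ => hB, isDensitySet_univ,
    fun _ hA _ hB h => hA.sdiff_of_densLE hB h,
    fun _ hA _ hB h => hA.union_of_disjoint hB (disjoint_iff_inter_eq_empty.2 h),
    fun _ hA hch => let ⟨B, hB, hlub⟩ := exists_isDensLUB hA hch; ⟨B, hB, hlub⟩⟩

def genDSystem (F : Set (Set ℕ)) : Set (Set ℕ) := ⋂₀ {Δ | IsDSystem Δ ∧ F ⊆ Δ}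

section Generated

variable {F : Set (Set ℕ)} {A B : Set ℕ}

lemma mem_genDSystem : A ∈ genDSystem F ↔ ∀ Δ, IsDSystem Δ → F ⊆ Δ → A ∈ Δ := by
  simp [genDSystem]

lemma subset_genDSystem : F ⊆ genDSystem F := fun _ hA _ hΔ => hΔ.2 hA

lemma genDSystem_subset {Δ : Set (Set ℕ)} (hΔ : IsDSystem Δ) (hF : F ⊆ Δ) :
    genDSystem F ⊆ Δ :=
  sInter_subset_of_mem ⟨hΔ, hF⟩

lemma isDSystem_genDSystem (hF : ∀ A ∈ F, IsDensitySet A) : IsDSystem (genDSystem F) :=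
  IsDSystem.sInter ⟨_, isDSystem_setOf_isDensitySet, hF⟩ fun _ hΔ => hΔ.1

theorem genDSystem_inter_mem (hFd : ∀ A ∈ F, IsDensitySet A)
    (hFi : ∀ A ∈ F, ∀ B ∈ F, A ∩ B ∈ F) (hA : A ∈ genDSystem F) (hB : B ∈ genDSystem F) :
    A ∩ B ∈ genDSystem F := by
  have hslice : ∀ A ∈ genDSystem F, (∀ C ∈ F, A ∩ C ∈ genDSystem F) →
      ∀ B ∈ genDSystem F, A ∩ B ∈ genDSystem F := fun A hA hAF B hB =>
    (genDSystem_subset ((isDSystem_genDSystem hFd).setOf_inter_mem hA)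
      (fun C hC => ⟨subset_genDSystem hC, hAF C hC⟩) hB).2
  have hF : ∀ A ∈ F, ∀ B ∈ genDSystem F, A ∩ B ∈ genDSystem F := fun A hA =>
    hslice A (subset_genDSystem hA) fun C hC => subset_genDSystem (hFi A hA C hC)
  exact inter_comm B A ▸ hslice B hB (fun C hC => inter_comm C B ▸ hF C hC B hB) A hA

end Generated

/-- If `𝓕 ⊆ 𝒟` is closed under finite intersections and `Δ` is the
intersection of all d-systems in `𝒟/∼` containing `𝓕/∼`, then `Δ` is closed under
intersections. -/
theorem dSystem_generated_inter_closed (F : Set (Set ℕ))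
    (hFdens : ∀ A ∈ F, IsDensitySet A)
    (hFinter : ∀ A ∈ F, ∀ B ∈ F, A ∩ B ∈ F) :
    ∀ A ∈ {A : Set ℕ | ∀ Δ : Set (Set ℕ), IsDSystem Δ → F ⊆ Δ → A ∈ Δ},
    ∀ B ∈ {A : Set ℕ | ∀ Δ : Set (Set ℕ), IsDSystem Δ → F ⊆ Δ → A ∈ Δ},
      IsDensitySet (A ∩ B) ∧
        A ∩ B ∈ {A : Set ℕ | ∀ Δ : Set (Set ℕ), IsDSystem Δ → F ⊆ Δ → A ∈ Δ} := by
  intro A hA B hB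
  have hAB := genDSystem_inter_mem hFdens hFinter (mem_genDSystem.2 hA) (mem_genDSystem.2 hB)
  exact ⟨(isDSystem_genDSystem hFdens).isDensitySet hAB, mem_genDSystem.1 hAB⟩
end

section
/- Let L = {𝟬, A, B, C, 𝟭} be the pentagon lattice N₅: 𝟬 < A < 𝟭, 𝟬 < B < C < 𝟭, with A ∧ B = A ∧ C = 𝟬 and A ∨ B = A ∨ C = 𝟭. Then in the quotient space X = c₀₀(L)/Δ one has 1 ⊗ B = 1 ⊗ C, and X is spanned by the two elements 1 ⊗ A and 1 ⊗ B (with 1 ⊗ 𝟭 = 1 ⊗ A + 1 ⊗ B). -/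
/-- The subspace `Δ ⊆ c₀₀(L)` spanned by `e_𝟬` and the vectors
`(e_A + e_B) − (e_{A∨B} + e_{A∧B})`. -/
noncomputable def deltaSpan (L : Type*) [Lattice L] [BoundedOrder L] :
    Submodule ℝ (L →₀ ℝ) :=
  Submodule.span ℝ
    ({Finsupp.single (⊥ : L) (1 : ℝ)} ∪
      {f : L →₀ ℝ | ∃ A B : L,
        f = Finsupp.single A 1 + Finsupp.single B 1
          - (Finsupp.single (A ⊔ B) 1 + Finsupp.single (A ⊓ B) 1)})

/-- The quotient space `X = c₀₀(L)/Δ`. -/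
abbrev XSpace (L : Type*) [Lattice L] [BoundedOrder L] :=
  (L →₀ ℝ) ⧸ deltaSpan L

/-- The element `a ⊗ A := q(a·e_A)` of `X`. -/
noncomputable def tens (L : Type*) [Lattice L] [BoundedOrder L] (a : ℝ) (A : L) :
    XSpace L :=
  Submodule.Quotient.mk (Finsupp.single A a)

/-! Since `A` is a complement of both `B` and `C`, the defining relations of `Δ` give
`1 ⊗ 𝟭 = 1 ⊗ A + 1 ⊗ B = 1 ⊗ A + 1 ⊗ C`; as the `e_x` span `c₀₀(L)`, the five vectors
`1 ⊗ x` span `X`, and each of them lies in the span of `1 ⊗ A` and `1 ⊗ B`. -/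

section
variable {L : Type*} [Lattice L] [BoundedOrder L]

theorem tens_bot : tens L 1 (⊥ : L) = 0 :=
  (Submodule.Quotient.mk_eq_zero _).2 (Submodule.subset_span (Or.inl rfl))

theorem tens_add_tens (A B : L) :
    tens L 1 A + tens L 1 B = tens L 1 (A ⊔ B) + tens L 1 (A ⊓ B) := by
  rw [tens, tens, tens, tens, ← Submodule.Quotient.mk_add, ← Submodule.Quotient.mk_add,
    Submodule.Quotient.eq]
  exact Submodule.subset_span (Or.inr ⟨A, B, rfl⟩)

theorem tens_sup_of_inf_eq_bot {A B : L} (h : A ⊓ B = ⊥) :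
    tens L 1 (A ⊔ B) = tens L 1 A + tens L 1 B := by
  rw [tens_add_tens, h, tens_bot, add_zero]

theorem span_range_tens : Submodule.span ℝ (Set.range (tens L 1)) = ⊤ := by
  have hrange : Set.range (tens L 1) =
      (deltaSpan L).mkQ '' Set.range (Finsupp.basisSingleOne (R := ℝ)) := by
    rw [← Set.range_comp]
    rfl
  rw [hrange, Submodule.span_image, Finsupp.basisSingleOne.span_eq, Submodule.map_top,
    Submodule.range_mkQ]

end

theorem xSpace_of_pentagon_lattice_general {L : Type*} [Lattice L] [BoundedOrder L]
    (A B C : L)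
    (hinfAB : A ⊓ B = ⊥) (hinfAC : A ⊓ C = ⊥)
    (hsupAB : A ⊔ B = ⊤) (hsupAC : A ⊔ C = ⊤)
    (hcarrier : ∀ x : L, x = ⊥ ∨ x = A ∨ x = B ∨ x = C ∨ x = ⊤) :
    tens L 1 B = tens L 1 C ∧
    tens L 1 (⊤ : L) = tens L 1 A + tens L 1 B ∧
    (∀ x : XSpace L, ∃ a b : ℝ, x = a • tens L 1 A + b • tens L 1 B) := by
  have htopB : tens L 1 (⊤ : L) = tens L 1 A + tens L 1 B :=
    hsupAB ▸ tens_sup_of_inf_eq_bot hinfAB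
  have htopC : tens L 1 (⊤ : L) = tens L 1 A + tens L 1 C :=
    hsupAC ▸ tens_sup_of_inf_eq_bot hinfAC
  have hBC : tens L 1 B = tens L 1 C := add_left_cancel (htopB.symm.trans htopC)
  refine ⟨hBC, htopB, fun x => ?_⟩
  have hspan : Set.range (tens L 1) ⊆ Submodule.span ℝ {tens L 1 A, tens L 1 B} := by
    rintro _ ⟨y, rfl⟩
    rcases hcarrier y with rfl | rfl | rfl | rfl | rfl
    · rw [tens_bot]; exact Submodule.zero_mem _
    · exact Submodule.subset_span (by simp)
    · exact Submodule.subset_span (by simp)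
    · rw [← hBC]; exact Submodule.subset_span (by simp)
    · rw [htopB]; exact Submodule.add_mem _ (Submodule.subset_span (by simp))
        (Submodule.subset_span (by simp))
  have hx : x ∈ Submodule.span ℝ {tens L 1 A, tens L 1 B} :=
    Submodule.span_le.2 hspan (span_range_tens (L := L) ▸ Submodule.mem_top)
  obtain ⟨a, b, hab⟩ := Submodule.mem_span_pair.1 hx
  exact ⟨a, b, hab.symm⟩

/-- Let `L = {𝟬, A, B, C, 𝟭}` be the pentagon lattice `N₅`
(`𝟬 < A < 𝟭`, `𝟬 < B < C < 𝟭`, `A ∧ B = A ∧ C = 𝟬`, `A ∨ B = A ∨ C = 𝟭`). Then in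
`X = c₀₀(L)/Δ` one has `1 ⊗ B = 1 ⊗ C`, `1 ⊗ 𝟭 = 1 ⊗ A + 1 ⊗ B`, and `X` is spanned by
`1 ⊗ A` and `1 ⊗ B`. -/
theorem xSpace_of_pentagon_lattice {L : Type*} [Lattice L] [BoundedOrder L]
    (A B C : L)
    (hbotA : (⊥ : L) < A) (hAtop : A < ⊤)
    (hbotB : (⊥ : L) < B) (hBC : B < C) (hCtop : C < ⊤)
    (hinfAB : A ⊓ B = ⊥) (hinfAC : A ⊓ C = ⊥)
    (hsupAB : A ⊔ B = ⊤) (hsupAC : A ⊔ C = ⊤)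
    (hcarrier : ∀ x : L, x = ⊥ ∨ x = A ∨ x = B ∨ x = C ∨ x = ⊤) :
    tens L 1 B = tens L 1 C ∧
    tens L 1 (⊤ : L) = tens L 1 A + tens L 1 B ∧
    (∀ x : XSpace L, ∃ a b : ℝ, x = a • tens L 1 A + b • tens L 1 B) :=
  xSpace_of_pentagon_lattice_general A B C hinfAB hinfAC hsupAB hsupAC hcarrier
end

section
/- Let L be a bounded lattice, φ : L → [0,1] any mapping, and define φ*(A) := ‖1 ⊗ A‖_{L¹(L,φ)}. Then for every 1 ≤ p < ∞ and every x ∈ X, the seminorms built from φ* and from φ coincide: ‖x‖_{L^p(L,φ*)} = ‖x‖_{L^p(L,φ)}. -/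
/-- The smallest preorder `⊑` on `X` that is translation invariant, invariant under
multiplication by positive scalars, and satisfies `a ⊗ A ⊑ b ⊗ A` for `a ≤ b` and
`1 ⊗ A ⊑ 1 ⊗ B` for `A ≤ B`. -/
inductive SqLe (L : Type*) [Lattice L] [BoundedOrder L] : XSpace L → XSpace L → Prop
  | refl (x : XSpace L) : SqLe L x x
  | trans {x y z : XSpace L} : SqLe L x y → SqLe L y z → SqLe L x z
  | add_right {x y : XSpace L} (z : XSpace L) : SqLe L x y → SqLe L (x + z) (y + z)
  | smul_pos {x y : XSpace L} (c : ℝ) : 0 < c → SqLe L x y → SqLe L (c • x) (c • y)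
  | coeff (a b : ℝ) (A : L) : a ≤ b → SqLe L (tens L a A) (tens L b A)
  | mono (A B : L) : A ≤ B → SqLe L (tens L 1 A) (tens L 1 B)

/-- The `L^p(L, φ)`-seminorm on `X`:
`‖x‖ = inf { (∑ₖ |bₖ|^p φ(Bₖ))^{1/p} : ±x ⊑ ∑ₖ |bₖ| ⊗ Bₖ }`,
the infimum taken over finite families `(bₖ) ⊆ ℝ`, `(Bₖ) ⊆ L`. -/
noncomputable def lpSeminorm (L : Type*) [Lattice L] [BoundedOrder L]
    (φ : L → ℝ) (p : ℝ) (x : XSpace L) : ℝ :=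
  sInf {r : ℝ | ∃ (n : ℕ) (b : Fin n → ℝ) (B : Fin n → L),
    SqLe L x (∑ k, tens L |b k| (B k)) ∧
    SqLe L (-x) (∑ k, tens L |b k| (B k)) ∧
    r = (∑ k, |b k| ^ p * φ (B k)) ^ (1 / p)}

/-!
`φ* ≤ φ` because `1 ⊗ A` majorizes itself, and the `Lᵖ` seminorm is monotone in the weight.
Conversely, take a majorant `∑ₖ |bₖ| ⊗ Bₖ` of `±x` and replace each `1 ⊗ Bₖ` by an `L¹(φ)`
majorant `∑ⱼ |cₖⱼ| ⊗ Cₖⱼ` of cost below `φ*(Bₖ) + ε`; splitting coefficients, we may take `|cₖⱼ| ≤ 1`,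
so `|cₖⱼ|ᵖ ≤ |cₖⱼ|`, and the substituted majorant `∑ |bₖ cₖⱼ| ⊗ Cₖⱼ` of `±x` has `Lᵖ(φ)` cost at
most `∑ₖ |bₖ|ᵖ (φ*(Bₖ) + ε)`; let `ε → 0`.
-/

theorem ContinuousAt.le_of_forall_pos_le {f : ℝ → ℝ} {a : ℝ} (hf : ContinuousAt f 0)
    (h : ∀ ε > 0, a ≤ f ε) : a ≤ f 0 :=
  ge_of_tendsto (hf.tendsto.mono_left (nhdsWithin_le_nhds (s := Set.Ioi 0)))
    (eventually_nhdsWithin_of_forall h)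

theorem sum_abs_rpow_mul_nonneg {α ι : Type*} [Fintype ι] {φ : α → ℝ} {p : ℝ}
    (hφ : ∀ A, 0 ≤ φ A) (b : ι → ℝ) (B : ι → α) : 0 ≤ ∑ i, |b i| ^ p * φ (B i) :=
  Finset.sum_nonneg fun _ _ => mul_nonneg (Real.rpow_nonneg (abs_nonneg _) _) (hφ _)

section

variable {L : Type*} [Lattice L] [BoundedOrder L] {φ ψ : L → ℝ} {p : ℝ} {x : XSpace L}

theorem tens_neg (a : ℝ) (A : L) : tens L (-a) A = -tens L a A := by
  rw [tens, tens, Finsupp.single_neg, Submodule.Quotient.mk_neg]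

theorem smul_tens (c a : ℝ) (A : L) : c • tens L a A = tens L (c * a) A := by
  rw [tens, tens, ← Submodule.Quotient.mk_smul, Finsupp.smul_single']

theorem sum_fin_tens_div (a : ℝ) (A : L) {n : ℕ} (hn : n ≠ 0) :
    ∑ _i : Fin n, tens L (a / n) A = tens L a A := by
  rw [Finset.sum_const, Finset.card_univ, Fintype.card_fin, ← Nat.cast_smul_eq_nsmul ℝ,
    smul_tens, mul_div_cancel₀ _ (Nat.cast_ne_zero.mpr hn)]

namespace SqLe

theorem add {x y z w : XSpace L} (h₁ : SqLe L x y) (h₂ : SqLe L z w) :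
    SqLe L (x + z) (y + w) := by
  have h₂' := h₂.add_right y
  rw [add_comm z, add_comm w] at h₂'
  exact (h₁.add_right z).trans h₂'

theorem smul_nonneg {x y : XSpace L} {c : ℝ} (hc : 0 ≤ c) (h : SqLe L x y) :
    SqLe L (c • x) (c • y) := by
  rcases hc.eq_or_lt with rfl | hc
  · simpa only [zero_smul] using refl 0
  · exact smul_pos c hc h

theorem sum {ι : Type*} (s : Finset ι) {f g : ι → XSpace L}
    (h : ∀ i ∈ s, SqLe L (f i) (g i)) : SqLe L (∑ i ∈ s, f i) (∑ i ∈ s, g i) := by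
  classical
  induction s using Finset.induction with
  | empty => simpa only [Finset.sum_empty] using refl 0
  | insert a s ha ih =>
    rw [Finset.sum_insert ha, Finset.sum_insert ha]
    exact (h a (s.mem_insert_self a)).add (ih fun i hi => h i (Finset.mem_insert_of_mem hi))

theorem sum_tens_sigma {ι : Type*} [Fintype ι] {κ : ι → Type*} [∀ i, Fintype (κ i)]
    (b : ι → ℝ) (B : ι → L) (c : ∀ i, κ i → ℝ) (C : ∀ i, κ i → L)
    (h : ∀ i, SqLe L (tens L 1 (B i)) (∑ j, tens L |c i j| (C i j))) :
    SqLe L (∑ i, tens L |b i| (B i))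
      (∑ s : Σ i, κ i, tens L |b s.1 * c s.1 s.2| (C s.1 s.2)) := by
  have hlhs : ∀ i, tens L |b i| (B i) = |b i| • tens L 1 (B i) := fun i => by
    rw [smul_tens, mul_one]
  have hrhs : ∀ i, ∑ j, tens L |b i * c i j| (C i j) = |b i| • ∑ j, tens L |c i j| (C i j) :=
    fun i => by simp only [Finset.smul_sum, smul_tens, abs_mul]
  rw [Fintype.sum_sigma' fun i j => tens L |b i * c i j| (C i j)]
  simp only [hlhs, hrhs]
  exact sum _ fun i _ => smul_nonneg (abs_nonneg _) (h i)

end SqLe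

theorem exists_sqLe_sum_tens (x : XSpace L) :
    ∃ (n : ℕ) (b : Fin n → ℝ) (B : Fin n → L),
      SqLe L x (∑ k, tens L |b k| (B k)) ∧ SqLe L (-x) (∑ k, tens L |b k| (B k)) := by
  obtain ⟨f, rfl⟩ := Submodule.Quotient.mk_surjective (deltaSpan L) x
  induction f using Finsupp.induction with
  | zero => exact ⟨0, Fin.elim0, Fin.elim0, by simpa using SqLe.refl 0, by simpa using SqLe.refl 0⟩
  | single_add A a f _ _ ih =>
    obtain ⟨n, b, B, h₁, h₂⟩ := ih
    have hsum : ∑ k : Fin (n + 1), tens L |(Fin.cons a b : Fin (n + 1) → ℝ) k|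
        ((Fin.cons A B : Fin (n + 1) → L) k) = tens L |a| A + ∑ k, tens L |b k| (B k) := by
      simp [Fin.sum_univ_succ]
    have hA : Submodule.Quotient.mk (Finsupp.single A a) = tens L a A := rfl
    refine ⟨n + 1, Fin.cons a b, Fin.cons A B, ?_, ?_⟩ <;>
      rw [hsum, Submodule.Quotient.mk_add, hA]
    · exact (SqLe.coeff a |a| A (le_abs_self a)).add h₁
    · rw [neg_add, ← tens_neg]
      exact (SqLe.coeff (-a) |a| A (neg_le_abs a)).add h₂

theorem lpSeminorm_le_of_sqLe {ι : Type*} [Fintype ι] (hφ : ∀ A, 0 ≤ φ A) (b : ι → ℝ)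
    (B : ι → L) (h₁ : SqLe L x (∑ i, tens L |b i| (B i)))
    (h₂ : SqLe L (-x) (∑ i, tens L |b i| (B i))) :
    lpSeminorm L φ p x ≤ (∑ i, |b i| ^ p * φ (B i)) ^ (1 / p) := by
  let e := (Fintype.equivFin ι).symm
  refine csInf_le ⟨0, ?_⟩ ⟨_, fun k => b (e k), fun k => B (e k), ?_, ?_, ?_⟩
  · rintro _ ⟨n, b, B, -, -, rfl⟩
    exact Real.rpow_nonneg (sum_abs_rpow_mul_nonneg hφ b B) _
  · rwa [Equiv.sum_comp e fun i => tens L |b i| (B i)]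
  · rwa [Equiv.sum_comp e fun i => tens L |b i| (B i)]
  · rw [Equiv.sum_comp e fun i => |b i| ^ p * φ (B i)]

theorem le_lpSeminorm {r : ℝ} (h : ∀ (n : ℕ) (b : Fin n → ℝ) (B : Fin n → L),
      SqLe L x (∑ k, tens L |b k| (B k)) → SqLe L (-x) (∑ k, tens L |b k| (B k)) →
        r ≤ (∑ k, |b k| ^ p * φ (B k)) ^ (1 / p)) :
    r ≤ lpSeminorm L φ p x := by
  obtain ⟨n, b, B, h₁, h₂⟩ := exists_sqLe_sum_tens x
  refine le_csInf ⟨_, n, b, B, h₁, h₂, rfl⟩ ?_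
  rintro _ ⟨n, b, B, h₁, h₂, rfl⟩
  exact h n b B h₁ h₂

theorem exists_sqLe_of_lpSeminorm_lt {r : ℝ} (hr : lpSeminorm L φ p x < r) :
    ∃ (n : ℕ) (b : Fin n → ℝ) (B : Fin n → L),
      SqLe L x (∑ k, tens L |b k| (B k)) ∧ SqLe L (-x) (∑ k, tens L |b k| (B k)) ∧
        (∑ k, |b k| ^ p * φ (B k)) ^ (1 / p) < r := by
  unfold lpSeminorm at hr
  obtain ⟨n, b, B, h₁, h₂⟩ := exists_sqLe_sum_tens x
  obtain ⟨_, ⟨n, b, B, h₁, h₂, rfl⟩, hlt⟩ :=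
    exists_lt_of_csInf_lt (by exact ⟨_, n, b, B, h₁, h₂, rfl⟩) hr
  exact ⟨n, b, B, h₁, h₂, hlt⟩

theorem lpSeminorm_nonneg (hφ : ∀ A, 0 ≤ φ A) : 0 ≤ lpSeminorm L φ p x :=
  le_lpSeminorm fun _ b B _ _ => Real.rpow_nonneg (sum_abs_rpow_mul_nonneg hφ b B) _

theorem lpSeminorm_mono_weight (hψ : ∀ A, 0 ≤ ψ A) (hψφ : ∀ A, ψ A ≤ φ A) (hp : 0 ≤ p)
    (x : XSpace L) : lpSeminorm L ψ p x ≤ lpSeminorm L φ p x :=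
  le_lpSeminorm fun _ b B h₁ h₂ => (lpSeminorm_le_of_sqLe hψ b B h₁ h₂).trans <|
    Real.rpow_le_rpow (sum_abs_rpow_mul_nonneg hψ b B)
      (Finset.sum_le_sum fun _ _ =>
        mul_le_mul_of_nonneg_left (hψφ _) (Real.rpow_nonneg (abs_nonneg _) _))
      (one_div_nonneg.mpr hp)

theorem lpSeminorm_one_tens_one_le (hφ : ∀ A, 0 ≤ φ A) (A : L) :
    lpSeminorm L φ 1 (tens L 1 A) ≤ φ A := by
  have h := lpSeminorm_le_of_sqLe (p := 1) hφ (fun _ : Unit => (1 : ℝ)) (fun _ => A)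
    (x := tens L 1 A) (by simpa using SqLe.refl _)
    (by simpa [← tens_neg] using SqLe.coeff (-1) 1 A (by norm_num))
  simpa using h

theorem exists_abs_le_one_sum_tens_eq {ι : Type*} [Fintype ι] (φ : L → ℝ) (c : ι → ℝ)
    (C : ι → L) :
    ∃ (M : ℕ) (c' : Fin M → ℝ) (C' : Fin M → L), (∀ i, |c' i| ≤ 1) ∧
      ∑ i, tens L |c' i| (C' i) = ∑ j, tens L |c j| (C j) ∧
      ∑ i, |c' i| * φ (C' i) = ∑ j, |c j| * φ (C j) := by
  set N : ι → ℕ := fun j => ⌈|c j|⌉₊ + 1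
  have hN : ∀ j, (0 : ℝ) < N j := fun j => by positivity
  have hpiece : ∀ j, |(|c j| / N j)| = |c j| / N j := fun j =>
    abs_of_nonneg (div_nonneg (abs_nonneg _) (hN j).le)
  let e := (Fintype.equivFin (Σ j, Fin (N j))).symm
  refine ⟨_, fun i => |c (e i).1| / N (e i).1, fun i => C (e i).1, fun i => ?_, ?_, ?_⟩
  · rw [hpiece, div_le_one (hN _)]
    exact (Nat.le_ceil _).trans (by simp [N])
  · rw [Equiv.sum_comp e fun s => tens L |(|c s.1| / N s.1)| (C s.1),
      Fintype.sum_sigma' fun j (_ : Fin (N j)) => tens L |(|c j| / N j)| (C j)]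
    refine Finset.sum_congr rfl fun j _ => ?_
    rw [hpiece, sum_fin_tens_div _ _ (Nat.succ_ne_zero _)]
  · rw [Equiv.sum_comp e fun s => |(|c s.1| / N s.1)| * φ (C s.1),
      Fintype.sum_sigma' fun j (_ : Fin (N j)) => |(|c j| / N j)| * φ (C j)]
    refine Finset.sum_congr rfl fun j _ => ?_
    rw [hpiece, Finset.sum_const, Finset.card_univ, Fintype.card_fin, nsmul_eq_mul,
      ← mul_assoc, mul_div_cancel₀ _ (hN j).ne']

theorem exists_sqLe_abs_le_one_of_lpSeminorm_one_lt {A : L} {r : ℝ}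
    (hr : lpSeminorm L φ 1 (tens L 1 A) < r) :
    ∃ (M : ℕ) (c : Fin M → ℝ) (C : Fin M → L), (∀ i, |c i| ≤ 1) ∧
      SqLe L (tens L 1 A) (∑ i, tens L |c i| (C i)) ∧ ∑ i, |c i| * φ (C i) < r := by
  obtain ⟨n, b, B, h₁, -, hlt⟩ := exists_sqLe_of_lpSeminorm_lt hr
  obtain ⟨M, c, C, hc, htens, hcost⟩ := exists_abs_le_one_sum_tens_eq φ b B
  refine ⟨M, c, C, hc, htens ▸ h₁, ?_⟩
  simpa only [hcost, Real.rpow_one, div_one] using hlt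

theorem lpSeminorm_le_sum_lpSeminorm_one_add (hφ : ∀ A, 0 ≤ φ A) (hp : 1 ≤ p) {n : ℕ}
    (b : Fin n → ℝ) (B : Fin n → L) (h₁ : SqLe L x (∑ k, tens L |b k| (B k)))
    (h₂ : SqLe L (-x) (∑ k, tens L |b k| (B k))) {ε : ℝ} (hε : 0 < ε) :
    lpSeminorm L φ p x ≤
      (∑ k, |b k| ^ p * (lpSeminorm L φ 1 (tens L 1 (B k)) + ε)) ^ (1 / p) := by
  choose M c C hc hsq hcost using fun k =>
    exists_sqLe_abs_le_one_of_lpSeminorm_one_lt (φ := φ) (lt_add_of_pos_right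
      (lpSeminorm L φ 1 (tens L 1 (B k))) hε)
  have hmaj := SqLe.sum_tens_sigma b B c C hsq
  refine (lpSeminorm_le_of_sqLe hφ _ _ (h₁.trans hmaj) (h₂.trans hmaj)).trans <|
    Real.rpow_le_rpow (sum_abs_rpow_mul_nonneg hφ _ _) ?_ (by positivity)
  rw [Fintype.sum_sigma' fun k j => |b k * c k j| ^ p * φ (C k j)]
  refine Finset.sum_le_sum fun k _ => ?_
  calc ∑ j, |b k * c k j| ^ p * φ (C k j)
      = |b k| ^ p * ∑ j, |c k j| ^ p * φ (C k j) := by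
        simp only [Finset.mul_sum, abs_mul, Real.mul_rpow (abs_nonneg _) (abs_nonneg _),
          mul_assoc]
    _ ≤ |b k| ^ p * ∑ j, |c k j| * φ (C k j) := by
        gcongr with j
        · exact hφ _
        · exact Real.rpow_le_self_of_le_one (abs_nonneg _) (hc k j) hp
    _ ≤ |b k| ^ p * (lpSeminorm L φ 1 (tens L 1 (B k)) + ε) := by
        gcongr
        exact (hcost k).le

theorem lpSeminorm_le_lpSeminorm_starMap (hφ : ∀ A, 0 ≤ φ A) (hp : 1 ≤ p) (x : XSpace L) :
    lpSeminorm L φ p x ≤ lpSeminorm L (fun A => lpSeminorm L φ 1 (tens L 1 A)) p x := by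
  refine le_lpSeminorm fun n b B h₁ h₂ => ?_
  have hcont : ContinuousAt
      (fun ε => (∑ k, |b k| ^ p * (lpSeminorm L φ 1 (tens L 1 (B k)) + ε)) ^ (1 / p)) 0 :=
    (by fun_prop : Continuous fun ε : ℝ => ∑ k, |b k| ^ p *
      (lpSeminorm L φ 1 (tens L 1 (B k)) + ε)).continuousAt.rpow_const
      (Or.inr (by positivity))
  simpa only [add_zero] using hcont.le_of_forall_pos_le fun ε hε =>
    lpSeminorm_le_sum_lpSeminorm_one_add hφ hp b B h₁ h₂ hε

end

theorem lpSeminorm_starMap_eq_general {L : Type*} [Lattice L] [BoundedOrder L]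
    (φ : L → ℝ) (hφ0 : ∀ A, 0 ≤ φ A)
    (p : ℝ) (hp : 1 ≤ p) (x : XSpace L) :
    lpSeminorm L (fun A => lpSeminorm L φ 1 (tens L 1 A)) p x
      = lpSeminorm L φ p x :=
  le_antisymm
    (lpSeminorm_mono_weight (fun _ => lpSeminorm_nonneg hφ0) (lpSeminorm_one_tens_one_le hφ0)
      (zero_le_one.trans hp) x)
    (lpSeminorm_le_lpSeminorm_starMap hφ0 hp x)

/-- For any mapping `φ : L → [0,1]` on a bounded lattice `L`, letting
`φ*(A) := ‖1 ⊗ A‖_{L¹(L,φ)}`, the seminorms built from `φ*` and from `φ` coincide: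
`‖x‖_{L^p(L,φ*)} = ‖x‖_{L^p(L,φ)}` for every `1 ≤ p < ∞` and every `x ∈ X`. -/
theorem lpSeminorm_starMap_eq {L : Type*} [Lattice L] [BoundedOrder L]
    (φ : L → ℝ) (hφ0 : ∀ A, 0 ≤ φ A) (hφ1 : ∀ A, φ A ≤ 1)
    (p : ℝ) (hp : 1 ≤ p) (x : XSpace L) :
    lpSeminorm L (fun A => lpSeminorm L φ 1 (tens L 1 A)) p x
      = lpSeminorm L φ p x :=
  lpSeminorm_starMap_eq_general φ hφ0 p hp x
end
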